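/- Let H be a nonzero complex Hilbert space and let B be an invertible bounded linear operator on H. Then ν_{B⁻¹} ≥ ν_B/‖B‖² and ν_B ≥ ν_{B⁻¹}/‖B⁻¹‖². -/

import Mathlib

/-- The numerical range (field of values) of a bounded operator `T`:
`W(T) = { ⟨Tz, z⟩ : ‖z‖ = 1 }`, where the inner product `⟨·,·⟩` is linear in
its first argument (so `⟨Tz, z⟩` is `inner z (T z)` in Mathlib's convention). -/
def numRange {H : Type*} [NormedAddCommGroup H] [InnerProductSpace ℂ H]
    (T : H →L[ℂ] H) : Set ℂ :=
  {c | ∃ z : H, ‖z‖ = 1 ∧ c = (inner ℂ z (T z) : ℂ)}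

/-- `ν_T = inf { |λ| : λ ∈ W(T) }`. -/
noncomputable def nu {H : Type*} [NormedAddCommGroup H] [InnerProductSpace ℂ H]
    (T : H →L[ℂ] H) : ℝ :=
  sInf {x : ℝ | ∃ c ∈ numRange T, x = ‖c‖}


section NumericalRange

variable {H : Type*} [NormedAddCommGroup H] [InnerProductSpace ℂ H]

lemma nu_le_norm_inner (T : H →L[ℂ] H) {z : H} (hz : ‖z‖ = 1) :
    nu T ≤ ‖(inner ℂ z (T z) : ℂ)‖ :=
  csInf_le ⟨0, by rintro x ⟨c, _, rfl⟩; exact norm_nonneg c⟩ ⟨_, ⟨z, hz, rfl⟩, rfl⟩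

lemma le_nu_of_forall_le [Nontrivial H] (T : H →L[ℂ] H) {a : ℝ}
    (h : ∀ z : H, ‖z‖ = 1 → a ≤ ‖(inner ℂ z (T z) : ℂ)‖) : a ≤ nu T := by
  obtain ⟨v, hv⟩ := exists_ne (0 : H)
  refine le_csInf ⟨_, ⟨_, ⟨_, norm_smul_inv_norm (𝕜 := ℂ) hv, rfl⟩, rfl⟩⟩ ?_
  rintro x ⟨c, ⟨z, hz, rfl⟩, rfl⟩
  exact h z hz

lemma nu_nonneg (T : H →L[ℂ] H) : 0 ≤ nu T :=
  Real.sInf_nonneg (by rintro x ⟨c, _, rfl⟩; exact norm_nonneg c)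

lemma nu_mul_norm_sq_le (T : H →L[ℂ] H) (y : H) :
    nu T * ‖y‖ ^ 2 ≤ ‖(inner ℂ y (T y) : ℂ)‖ := by
  rcases eq_or_ne y 0 with rfl | hy
  · simp
  have h_unit := nu_le_norm_inner T (norm_smul_inv_norm (𝕜 := ℂ) hy)
  rw [map_smul, inner_smul_left, inner_smul_right, ← mul_assoc, norm_mul, norm_mul,
    RCLike.norm_conj, norm_inv, RCLike.norm_coe_norm, ← sq, inv_pow, inv_mul_eq_div,
    le_div_iff₀ (by positivity)] at h_unit
  exact h_unit

/-- Substituting `z = B y` turns `⟪z, B⁻¹ z⟫` into `conj ⟪y, B y⟫`, and `‖y‖ ≥ ‖z‖ / ‖B‖`. -/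
lemma nu_div_opNorm_sq_le_nu_symm [Nontrivial H] (B : H ≃L[ℂ] H) :
    nu (B : H →L[ℂ] H) / ‖(B : H →L[ℂ] H)‖ ^ 2 ≤ nu (B.symm : H →L[ℂ] H) := by
  refine le_nu_of_forall_le _ fun z hz => ?_
  set y := B.symm z
  have hBy : B y = z := B.apply_symm_apply z
  have h_inner : ‖(inner ℂ z (B.symm z) : ℂ)‖ = ‖(inner ℂ y (B y) : ℂ)‖ := by
    rw [← inner_conj_symm, RCLike.norm_conj, hBy]
  have h_norm : 1 ≤ ‖(B : H →L[ℂ] H)‖ * ‖y‖ := by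
    simpa [hBy, hz] using (B : H →L[ℂ] H).le_opNorm y
  have h_scale :
      nu (B : H →L[ℂ] H) ≤ nu (B : H →L[ℂ] H) * ‖y‖ ^ 2 * ‖(B : H →L[ℂ] H)‖ ^ 2 := by
    rw [mul_assoc, ← mul_pow, mul_comm ‖y‖]
    exact le_mul_of_one_le_right (nu_nonneg _) (one_le_pow₀ h_norm)
  calc nu (B : H →L[ℂ] H) / ‖(B : H →L[ℂ] H)‖ ^ 2
      ≤ nu (B : H →L[ℂ] H) * ‖y‖ ^ 2 :=
        div_le_of_le_mul₀ (by positivity) (mul_nonneg (nu_nonneg _) (by positivity)) h_scale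
    _ ≤ ‖(inner ℂ z (B.symm z) : ℂ)‖ := h_inner ▸ nu_mul_norm_sq_le _ y

end NumericalRange

theorem nu_inv_ge_nu_div_norm_sq_general
    {H : Type*} [NormedAddCommGroup H] [InnerProductSpace ℂ H]
    [Nontrivial H] (B : H ≃L[ℂ] H) :
    nu (B.symm : H →L[ℂ] H) ≥ nu (B : H →L[ℂ] H) / ‖(B : H →L[ℂ] H)‖ ^ 2 ∧
    nu (B : H →L[ℂ] H) ≥ nu (B.symm : H →L[ℂ] H) / ‖(B.symm : H →L[ℂ] H)‖ ^ 2 :=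
  ⟨nu_div_opNorm_sq_le_nu_symm B, by simpa using nu_div_opNorm_sq_le_nu_symm B.symm⟩

/-- Inequalities (3.6b): `ν_{B⁻¹} ≥ ν_B / ‖B‖²` and `ν_B ≥ ν_{B⁻¹} / ‖B⁻¹‖²`. -/
theorem nu_inv_ge_nu_div_norm_sq
    {H : Type*} [NormedAddCommGroup H] [InnerProductSpace ℂ H] [CompleteSpace H]
    [Nontrivial H] (B : H ≃L[ℂ] H) :
    nu (B.symm : H →L[ℂ] H) ≥ nu (B : H →L[ℂ] H) / ‖(B : H →L[ℂ] H)‖ ^ 2 ∧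
    nu (B : H →L[ℂ] H) ≥ nu (B.symm : H →L[ℂ] H) / ‖(B.symm : H →L[ℂ] H)‖ ^ 2 :=
  nu_inv_ge_nu_div_norm_sq_general B
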